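/- arXiv:1610.09136 — 3 statements merged into one kernel-verified Lean document; each statement's English description precedes it below -/
import Mathlib

section
/- Suppose f ∈ K[[z]] satisfies p_{-1}(z) + p_j(z)f(z^{q^j}) + p_{j+1}(z)f(z^{q^{j+1}}) + ... + p_n(z)f(z^{q^n}) = 0, where j ≥ 1, p_j ≠ 0, and the p_i are polynomials. Then there exist polynomials q_{-1}, q_0, ..., q_{n-j} with q_0 ≠ 0 such that q_{-1}(z) + q_0(z)f(z) + q_1(z)f(z^q) + ... + q_{n-j}(z)f(z^{q^{n-j}}) = 0. Concretely, writing each p_i(z) = Σ_{k=0}^{q^j - 1} p_{i,k}(z^{q^j}) z^k, one has p_{-1,k}(z) + p_{j,k}(z)f(z) + ... + p_{n,k}(z)f(z^{q^{n-j}}) = 0 for every 0 ≤ k < q^j, and one may take any k with p_{j,k} ≠ 0. -/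
open Polynomial PowerSeries

/-- Substitution `z ↦ z^m` in a formal power series. -/
noncomputable def psExpand (K : Type*) [Field K] (m : ℕ) (f : PowerSeries K) : PowerSeries K :=
  PowerSeries.mk fun k => if m ∣ k then PowerSeries.coeff (k / m) f else 0

/-- `K(z)` acts on Laurent series via the Laurent expansion at the origin. -/
noncomputable instance {K : Type*} [Field K] : Algebra (RatFunc K) (LaurentSeries K) :=
  RingHom.toAlgebra (RatFunc.liftAlgHom (Algebra.ofId K[X] (LaurentSeries K))
    (nonZeroDivisors_le_comap_nonZeroDivisors_of_injective _
      (Polynomial.algebraMap_hahnSeries_injective _))).toRingHom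

/-- The `k`-th section of `p` modulo `m`: the polynomial `p_k` in the unique decomposition
`p(z) = ∑_{k=0}^{m-1} p_k(z^m) z^k`. -/
noncomputable def polySection (K : Type*) [Field K] (m k : ℕ) (p : K[X]) : K[X] :=
  ∑ j ∈ Finset.range (p.natDegree + 1), Polynomial.C (p.coeff (m * j + k)) * Polynomial.X ^ j

/-- The `k`-th section of a power series modulo `m`. -/
noncomputable def psSection (K : Type*) [Field K] (m k : ℕ) (g : PowerSeries K) :
    PowerSeries K :=
  PowerSeries.mk fun t => PowerSeries.coeff (m * t + k) g

lemma psSection_add {K : Type*} [Field K] (m k : ℕ) (g h : PowerSeries K) :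
    psSection K m k (g + h) = psSection K m k g + psSection K m k h := by
  ext t
  simp [psSection]

lemma psSection_sum {K : Type*} [Field K] (m k : ℕ) {ι : Type*} (s : Finset ι)
    (F : ι → PowerSeries K) :
    psSection K m k (∑ i ∈ s, F i) = ∑ i ∈ s, psSection K m k (F i) := by
  ext t
  simp [psSection, PowerSeries.coeff_mk]

lemma polySection_coeff {K : Type*} [Field K] (m k : ℕ) (hm : 0 < m) (p : K[X]) (t : ℕ) :
    (polySection K m k p).coeff t = p.coeff (m * t + k) := by
  unfold polySection
  rw [Polynomial.finset_sum_coeff]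
  simp only [Polynomial.coeff_C_mul, Polynomial.coeff_X_pow, mul_ite, mul_one, mul_zero]
  rw [Finset.sum_ite_eq (Finset.range (p.natDegree + 1)) t fun j => p.coeff (m * j + k)]
  by_cases ht : t ∈ Finset.range (p.natDegree + 1)
  · simp [ht]
  · simp only [ht, if_false]
    symm
    apply Polynomial.coeff_eq_zero_of_natDegree_lt
    simp only [Finset.mem_range, not_lt] at ht
    have : t ≤ m * t := Nat.le_mul_of_pos_left t hm
    omega

lemma psSection_coe {K : Type*} [Field K] (m k : ℕ) (hm : 0 < m) (p : K[X]) :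
    psSection K m k (p : PowerSeries K) = ((polySection K m k p : K[X]) : PowerSeries K) := by
  ext t
  rw [psSection, PowerSeries.coeff_mk, Polynomial.coeff_coe, Polynomial.coeff_coe,
    polySection_coeff m k hm]

lemma psExpand_mul {K : Type*} [Field K] (m m' : ℕ) (hm : 0 < m) (f : PowerSeries K) :
    psExpand K (m * m') f = psExpand K m (psExpand K m' f) := by
  ext t
  simp only [psExpand, PowerSeries.coeff_mk]
  by_cases h : m ∣ t
  · obtain ⟨c, rfl⟩ := h
    rw [if_pos (dvd_mul_right m c), Nat.mul_div_cancel_left c hm]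
    by_cases h' : m' ∣ c
    · rw [if_pos (mul_dvd_mul_left m h'), if_pos h', Nat.mul_div_mul_left c m' hm]
    · rw [if_neg, if_neg h']
      intro hd
      exact h' ((Nat.mul_dvd_mul_iff_left hm).mp hd)
  · rw [if_neg h, if_neg]
    intro hd
    exact h (dvd_trans (dvd_mul_right m m') hd)

lemma psSection_mul_expand {K : Type*} [Field K] (m k : ℕ) (hm : 0 < m) (hk : k < m)
    (g h : PowerSeries K) :
    psSection K m k (g * psExpand K m h) = psSection K m k g * h := by
  ext t
  simp only [psSection, psExpand, PowerSeries.coeff_mk, PowerSeries.coeff_mul,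
    Finset.Nat.sum_antidiagonal_eq_sum_range_succ_mk]
  have himg : ((Finset.range (t + 1)).image fun a => m * a + k)
      ⊆ Finset.range (m * t + k + 1) := by
    intro a ha
    simp only [Finset.mem_image, Finset.mem_range] at ha ⊢
    obtain ⟨u, hu, rfl⟩ := ha
    have : m * u ≤ m * t := Nat.mul_le_mul_left m (Nat.lt_succ_iff.mp hu)
    omega
  have hzero : ∀ a ∈ Finset.range (m * t + k + 1),
      a ∉ (Finset.range (t + 1)).image (fun a => m * a + k) →
      (PowerSeries.coeff a) g *
        (if m ∣ m * t + k - a then (PowerSeries.coeff ((m * t + k - a) / m)) h else 0) = 0 := by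
    intro a ha hna
    by_cases hd : m ∣ m * t + k - a
    · exfalso
      apply hna
      simp only [Finset.mem_range] at ha
      have hale : a ≤ m * t + k := Nat.lt_succ_iff.mp ha
      obtain ⟨s, hs⟩ := hd
      have hst : s ≤ t := by
        by_contra hc
        push_neg at hc
        have h1 : m * (t + 1) ≤ m * s := Nat.mul_le_mul_left m hc
        rw [Nat.mul_add, Nat.mul_one] at h1
        omega
      obtain ⟨d, rfl⟩ := Nat.exists_eq_add_of_le hst
      rw [Nat.mul_add] at hs
      have hexp : m * (s + d) = m * s + m * d := Nat.mul_add m s d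
      simp only [Finset.mem_image, Finset.mem_range]
      exact ⟨d, by omega, by omega⟩
    · simp [hd]
  rw [← Finset.sum_subset himg hzero, Finset.sum_image (by
    intro x _ y _ hxy
    have : m * x = m * y := by simp only at hxy; omega
    exact Nat.eq_of_mul_eq_mul_left hm this)]
  apply Finset.sum_congr rfl
  intro a ha
  simp only [Finset.mem_range] at ha
  obtain ⟨d, rfl⟩ := Nat.exists_eq_add_of_le (Nat.lt_succ_iff.mp ha)
  have h1 : m * (a + d) + k - (m * a + k) = m * d := by
    rw [Nat.mul_add]; omega
  rw [h1, if_pos (dvd_mul_right m d), Nat.mul_div_cancel_left d hm]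
  have h2 : a + d - a = d := by omega
  rw [h2]

/-- from an equation starting at `f(z^{q^j})` (with `j ≥ 1`, `p_j ≠ 0`) one extracts,
for every residue `k` mod `q^j`, an equation for `f(z), f(z^q), …, f(z^{q^{n-j}})`, and some
residue `k` has a nonzero coefficient `p_{j,k}` in front of `f(z)`. -/
theorem mahler_descend_equation {K : Type*} [Field K] [CharZero K]
    (q n j : ℕ) (hq : 2 ≤ q) (hj : 1 ≤ j) (hjn : j ≤ n)
    (f : PowerSeries K) (pneg : K[X]) (p : ℕ → K[X]) (hpj : p j ≠ 0)
    (heq : (pneg : PowerSeries K) +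
      ∑ i ∈ Finset.Icc j n, (p i : PowerSeries K) * psExpand K (q ^ i) f = 0) :
    (∀ k < q ^ j, (polySection K (q ^ j) k pneg : PowerSeries K) +
        ∑ i ∈ Finset.Icc j n,
          (polySection K (q ^ j) k (p i) : PowerSeries K) * psExpand K (q ^ (i - j)) f = 0) ∧
    ∃ k < q ^ j, polySection K (q ^ j) k (p j) ≠ 0 := by
  have hq0 : 0 < q := by omega
  have hm : 0 < q ^ j := pow_pos hq0 j
  constructor
  · intro k hk
    have h1 : psSection K (q ^ j) k ((pneg : PowerSeries K) +
        ∑ i ∈ Finset.Icc j n, (p i : PowerSeries K) * psExpand K (q ^ i) f) = 0 := by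
      rw [heq]
      ext t
      simp [psSection]
    rw [psSection_add, psSection_sum, psSection_coe _ _ hm] at h1
    have h2 : ∀ i ∈ Finset.Icc j n,
        psSection K (q ^ j) k ((p i : PowerSeries K) * psExpand K (q ^ i) f)
          = (polySection K (q ^ j) k (p i) : PowerSeries K) * psExpand K (q ^ (i - j)) f := by
      intro i hi
      have hji : j ≤ i := (Finset.mem_Icc.mp hi).1
      have hqi : q ^ i = q ^ j * q ^ (i - j) := by
        rw [← pow_add]
        congr 1
        omega
      rw [hqi, psExpand_mul _ _ hm, psSection_mul_expand _ _ hm hk, psSection_coe _ _ hm]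
    rw [Finset.sum_congr rfl h2] at h1
    exact h1
  · refine ⟨(p j).natDegree % q ^ j, Nat.mod_lt _ hm, ?_⟩
    intro h0
    have hne : (p j).coeff (p j).natDegree ≠ 0 := by
      rw [← Polynomial.leadingCoeff]
      exact Polynomial.leadingCoeff_ne_zero.mpr hpj
    apply hne
    have := congrArg (fun r => Polynomial.coeff r ((p j).natDegree / q ^ j)) h0
    simp only [polySection_coeff _ _ hm, Polynomial.coeff_zero] at this
    rwa [Nat.div_add_mod] at this
end

section
/- The set of formal power series solutions f ∈ K[[z]] of a fixed Mahler equation p_{-1}(z) + p_0(z)f(z) + p_1(z)f(z^q) + ... + p_n(z)f(z^{q^n}) = 0 with p_0 ≠ 0 is an affine subspace of K[[z]] whose dimension is at most 1 + ν_0/(q−1), where ν_0 is the z-adic valuation of p_0. In particular this bound does not depend on n. -/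
open Polynomial PowerSeries

lemma psExpand_add {K : Type*} [Field K] (m : ℕ) (f g : PowerSeries K) :
    psExpand K m (f + g) = psExpand K m f + psExpand K m g := by
  ext k
  simp only [psExpand, PowerSeries.coeff_mk, map_add]
  split <;> simp

lemma psExpand_smul {K : Type*} [Field K] (m : ℕ) (c : K) (f : PowerSeries K) :
    psExpand K m (c • f) = c • psExpand K m f := by
  ext k
  simp only [psExpand, PowerSeries.coeff_mk, map_smul, smul_eq_mul]
  split <;> simp

/-- The `K`-linear map `f ↦ ∑_{i=0}^n p_i(z) f(z^{q^i})` attached to a Mahler operator. -/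
noncomputable def mahlerHom (K : Type*) [Field K] (q n : ℕ) (p : Fin (n + 1) → K[X]) :
    PowerSeries K →ₗ[K] PowerSeries K where
  toFun f := ∑ i : Fin (n + 1), (p i : PowerSeries K) * psExpand K (q ^ (i : ℕ)) f
  map_add' f g := by
    simp [psExpand_add, mul_add, Finset.sum_add_distrib]
  map_smul' c f := by
    simp [psExpand_smul, Finset.smul_sum, mul_smul_comm]

lemma psExpand_one' {K : Type*} [Field K] (f : PowerSeries K) : psExpand K 1 f = f := by
  ext k
  simp [psExpand]

/-- Key vanishing lemma: a kernel element whose first `ν₀/(q-1) + 1` coefficients vanish is 0. -/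
lemma mahler_ker_determined {K : Type*} [Field K]
    (q n : ℕ) (hq : 2 ≤ q) (p : Fin (n + 1) → K[X]) (hp0 : p 0 ≠ 0)
    (f : PowerSeries K) (hf : mahlerHom K q n p f = 0)
    (hlow : ∀ k : ℕ, k ≤ (p 0).natTrailingDegree / (q - 1) → PowerSeries.coeff k f = 0) :
    f = 0 := by
  classical
  set ν : ℕ := (p 0).natTrailingDegree with hν
  by_contra hf0
  have hex : ∃ k, PowerSeries.coeff k f ≠ 0 := by
    by_contra h
    push_neg at h
    exact hf0 (PowerSeries.ext fun k => by simpa using h k)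
  set m := Nat.find hex with hm
  have hmne : PowerSeries.coeff m f ≠ 0 := Nat.find_spec hex
  have hmin : ∀ j < m, PowerSeries.coeff j f = 0 := fun j hj => by
    by_contra h; exact absurd (Nat.find_le h) (not_le.mpr hj)
  have hmgt : ν / (q - 1) < m := by
    by_contra h
    exact hmne (hlow m (not_lt.mp h))
  -- (q-1) * m > ν
  have hq1 : 0 < q - 1 := by omega
  have hkey : ν < (q - 1) * m := by
    have h1 := Nat.div_add_mod ν (q - 1)
    have h2 : ν % (q - 1) < q - 1 := Nat.mod_lt _ hq1
    have h3 : (q - 1) * (ν / (q - 1) + 1) ≤ (q - 1) * m := Nat.mul_le_mul_left _ hmgt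
    rw [Nat.mul_succ] at h3
    omega
  -- coefficient ν + m of mahlerHom f
  have hcoeff : PowerSeries.coeff (ν + m) (mahlerHom K q n p f) = 0 := by
    rw [hf]; simp
  rw [mahlerHom] at hcoeff
  simp only [LinearMap.coe_mk, AddHom.coe_mk, map_sum] at hcoeff
  have hsum : ∀ i : Fin (n + 1), (i : ℕ) ≠ 0 →
      PowerSeries.coeff (ν + m) ((p i : PowerSeries K) * psExpand K (q ^ (i : ℕ)) f) = 0 := by
    intro i hi
    rw [PowerSeries.coeff_mul]
    apply Finset.sum_eq_zero
    rintro ⟨a, b⟩ hab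
    rw [Finset.HasAntidiagonal.mem_antidiagonal] at hab
    simp only [psExpand, PowerSeries.coeff_mk]
    rcases Nat.eq_zero_or_pos (q ^ (i : ℕ)) with h0 | _
    · exact absurd h0 (by positivity)
    split_ifs with hdvd
    · rcases eq_or_ne (PowerSeries.coeff (b / q ^ (i : ℕ)) f) 0 with hz | hz
      · rw [hz, mul_zero]
      · exfalso
        have hge : m ≤ b / q ^ (i : ℕ) := by
          by_contra h
          exact hz (hmin _ (not_le.mp h))
        have hb : q ^ (i : ℕ) * m ≤ b := by
          calc q ^ (i : ℕ) * m ≤ q ^ (i : ℕ) * (b / q ^ (i : ℕ)) := Nat.mul_le_mul_left _ hge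
          _ = b := Nat.mul_div_cancel' hdvd
        have hqi : q ≤ q ^ (i : ℕ) := by
          calc q = q ^ 1 := (pow_one q).symm
          _ ≤ q ^ (i : ℕ) := Nat.pow_le_pow_right (by omega) (by omega)
        have h1 : (q - 1) * m ≤ (q ^ (i : ℕ) - 1) * m :=
          Nat.mul_le_mul_right _ (by omega)
        have hle : m ≤ q ^ (i : ℕ) * m := Nat.le_mul_of_pos_left m (by positivity)
        have h2 : (q ^ (i : ℕ) - 1) * m = q ^ (i : ℕ) * m - m := by
          rw [Nat.sub_mul, one_mul]
        omega
    · rw [mul_zero]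
  -- the i = 0 term
  have h0term : PowerSeries.coeff (ν + m)
      ((p 0 : PowerSeries K) * psExpand K (q ^ ((0 : Fin (n+1)) : ℕ)) f)
      = (p 0).coeff ν * PowerSeries.coeff m f := by
    have : ((0 : Fin (n + 1)) : ℕ) = 0 := rfl
    rw [this, pow_zero, psExpand_one', PowerSeries.coeff_mul]
    rw [Finset.sum_eq_single (ν, m)]
    · rw [Polynomial.coeff_coe]
    · rintro ⟨a, b⟩ hab hne
      rw [Finset.HasAntidiagonal.mem_antidiagonal] at hab
      rcases lt_trichotomy a ν with h | h | h
      · rw [Polynomial.coeff_coe, Polynomial.coeff_eq_zero_of_lt_natTrailingDegree h, zero_mul]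
      · exfalso; apply hne; subst h; simp only [Prod.mk.injEq, true_and]; omega
      · have : b < m := by omega
        rw [hmin b this, mul_zero]
    · intro h
      simp [Finset.mem_antidiagonal] at h
  rw [Finset.sum_eq_single_of_mem (0 : Fin (n + 1)) (Finset.mem_univ _)
      (fun i _ hi => hsum i (fun h => hi (Fin.ext (by simp [h]))))] at hcoeff
  rw [h0term] at hcoeff
  rcases mul_eq_zero.mp hcoeff with h | h
  · exact Polynomial.trailingCoeff_nonzero_iff_nonzero.mpr hp0 h
  · exact hmne h

/-- the set of power series solutions of the Mahler equation
`p₋₁ + ∑ p_i f(z^{q^i}) = 0` (with `p 0 ≠ 0`) is an affine subspace of `K[[z]]` — a coset of the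
kernel of the associated homogeneous linear map — of dimension at most `1 + ν₀/(q-1)`,
a bound independent of `n`. -/
theorem mahler_solution_affine_dimension_bound {K : Type*} [Field K] [CharZero K]
    (q n : ℕ) (hq : 2 ≤ q)
    (pneg : K[X]) (p : Fin (n + 1) → K[X]) (hp0 : p 0 ≠ 0) :
    (∀ f0 : PowerSeries K, (pneg : PowerSeries K) + mahlerHom K q n p f0 = 0 →
      {f : PowerSeries K | (pneg : PowerSeries K) + mahlerHom K q n p f = 0} =
        (fun g => f0 + g) '' (LinearMap.ker (mahlerHom K q n p) : Set (PowerSeries K))) ∧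
    Module.rank K (LinearMap.ker (mahlerHom K q n p)) ≤
      ((1 + (p 0).natTrailingDegree / (q - 1) : ℕ) : Cardinal) := by
  constructor
  · intro f0 h0
    ext f
    simp only [Set.mem_setOf_eq, Set.mem_image, SetLike.mem_coe, LinearMap.mem_ker]
    constructor
    · intro hfsol
      refine ⟨f - f0, ?_, by ring⟩
      rw [map_sub]
      have := sub_eq_zero_of_eq (hfsol.trans h0.symm)
      rw [add_sub_add_left_eq_sub] at this
      exact this
    · rintro ⟨g, hg, rfl⟩
      rw [map_add, hg, add_zero, h0]
  · set N := 1 + (p 0).natTrailingDegree / (q - 1) with hN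
    set φ : PowerSeries K →ₗ[K] (Fin N → K) :=
      LinearMap.pi (fun k : Fin N => PowerSeries.coeff (k : ℕ)) with hφ
    have hinj : Function.Injective (φ.comp (LinearMap.ker (mahlerHom K q n p)).subtype) := by
      rw [← LinearMap.ker_eq_bot, LinearMap.ker_eq_bot']
      rintro ⟨f, hf⟩ hzero
      rw [LinearMap.mem_ker] at hf
      have : f = 0 := by
        apply mahler_ker_determined q n hq p hp0 f hf
        intro k hk
        have hkN : k < N := by omega
        have := congrFun hzero ⟨k, hkN⟩
        simpa [φ] using this
      simp [this]
    calc Module.rank K (LinearMap.ker (mahlerHom K q n p))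
        ≤ Module.rank K (Fin N → K) := LinearMap.rank_le_of_injective _ hinj
    _ = N := rank_fin_fun N
end

section
/- Let f ∈ K[[z]] satisfy a Mahler equation of some order (i.e., f, f(z^q), f(z^{q^2}), ... together with 1 span a finite-dimensional K(z)-vector space). If V_f := Span_{K(z)}{1, f(z^{q^m}) : m ≥ 0} has dimension r, then f satisfies an inhomogeneous Mahler equation of order r − 1 with nonzero coefficient of f(z): there are polynomials p_{-1}, p_0, ..., p_{r−1} with p_0 ≠ 0 and p_{-1}(z) + p_0(z) f(z) + p_1(z) f(z^q) + ... + p_{r−1}(z) f(z^{q^{r−1}}) = 0, and no such equation of smaller order exists. -/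
open Polynomial PowerSeries

namespace MahlerAux

variable {K : Type*} [Field K]

theorem coeff_psExpand (m : ℕ) (f : PowerSeries K) (k : ℕ) :
    PowerSeries.coeff k (psExpand K m f) =
      if m ∣ k then PowerSeries.coeff (k / m) f else 0 := by
  simp [psExpand]

theorem psExpand_zero (m : ℕ) : psExpand K m (0 : PowerSeries K) = 0 := by
  ext k; simp [coeff_psExpand]

theorem psExpand_add (m : ℕ) (a b : PowerSeries K) :
    psExpand K m (a + b) = psExpand K m a + psExpand K m b := by
  ext k; simp only [coeff_psExpand, map_add]; split_ifs <;> simp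

theorem psExpand_sum {ι : Type*} (m : ℕ) (s : Finset ι) (g : ι → PowerSeries K) :
    psExpand K m (∑ i ∈ s, g i) = ∑ i ∈ s, psExpand K m (g i) := by
  classical
  induction s using Finset.induction_on with
  | empty => simp [psExpand_zero]
  | insert _ _ h ih => rw [Finset.sum_insert h, psExpand_add, ih, Finset.sum_insert h]

theorem psExpand_psExpand {a b : ℕ} (ha : 0 < a) (f : PowerSeries K) :
    psExpand K a (psExpand K b f) = psExpand K (a * b) f := by
  ext k
  simp only [coeff_psExpand]
  by_cases h : a ∣ k
  · rw [if_pos h]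
    by_cases h2 : b ∣ k / a
    · rw [if_pos h2, if_pos ((Nat.dvd_div_iff_mul_dvd h).mp h2), Nat.div_div_eq_div_mul]
    · rw [if_neg h2, if_neg (fun hab => h2 ((Nat.dvd_div_iff_mul_dvd h).mpr hab))]
  · rw [if_neg h, if_neg (fun hab => h (dvd_trans (Dvd.intro b rfl) hab))]

theorem psExpand_coe (m : ℕ) (hm : 0 < m) (p : K[X]) :
    psExpand K m (p : PowerSeries K) = ((Polynomial.expand K m p : K[X]) : PowerSeries K) := by
  ext k
  simp [coeff_psExpand, Polynomial.coeff_coe, Polynomial.coeff_expand hm]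

theorem filter_dvd_range (m t j : ℕ) (hm : 0 < m) (hj : j < m) :
    (Finset.range (m * t + j + 1)).filter (m ∣ ·) = (Finset.range (t + 1)).image (m * ·) := by
  ext x
  simp only [Finset.mem_filter, Finset.mem_range, Finset.mem_image]
  constructor
  · rintro ⟨hlt, u, rfl⟩
    refine ⟨u, ?_, rfl⟩
    have hmu : m * (t + 1) = m * t + m := by ring
    have : m * u < m * (t + 1) := by omega
    exact Nat.lt_of_mul_lt_mul_left this
  · rintro ⟨u, hu, rfl⟩
    have : m * u ≤ m * t := Nat.mul_le_mul_left m (by omega)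
    exact ⟨by omega, Dvd.intro u rfl⟩

theorem coeff_mul_expand (m : ℕ) (a b : PowerSeries K) (n : ℕ) :
    PowerSeries.coeff n (a * psExpand K m b) =
      ∑ x ∈ Finset.range (n + 1),
        PowerSeries.coeff (n - x) a *
          (if m ∣ x then PowerSeries.coeff (x / m) b else 0) := by
  rw [PowerSeries.coeff_mul, Finset.Nat.sum_antidiagonal_eq_sum_range_succ_mk,
    ← Finset.sum_range_reflect]
  apply Finset.sum_congr rfl
  intro x hx
  have hx' : x < n + 1 := Finset.mem_range.mp hx
  have h1 : n + 1 - 1 - x = n - x := by omega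
  have h2 : n - (n - x) = x := by omega
  rw [h1, h2, coeff_psExpand]

theorem sum_reflect_eq (t : ℕ) (g : ℕ → ℕ → K) :
    ∑ u ∈ Finset.range (t + 1), g u (t - u) =
      ∑ u ∈ Finset.range (t + 1), g (t - u) u := by
  rw [← Finset.sum_range_reflect]
  apply Finset.sum_congr rfl
  intro x hx
  have hx' : x < t + 1 := Finset.mem_range.mp hx
  have h1 : t + 1 - 1 - x = t - x := by omega
  have h2 : t - (t - x) = x := by omega
  rw [h1, h2]

theorem psExpand_mul {m : ℕ} (hm : 0 < m) (a b : PowerSeries K) :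
    psExpand K m (a * b) = psExpand K m a * psExpand K m b := by
  ext n
  rw [coeff_mul_expand, coeff_psExpand]
  have hsplit : ∀ x ∈ Finset.range (n + 1),
      PowerSeries.coeff (n - x) (psExpand K m a) *
        (if m ∣ x then PowerSeries.coeff (x / m) b else 0) =
      if m ∣ x then
        PowerSeries.coeff (n - x) (psExpand K m a) * PowerSeries.coeff (x / m) b
      else 0 := by
    intro x _; split_ifs <;> simp
  rw [Finset.sum_congr rfl hsplit, ← Finset.sum_filter]
  by_cases h : m ∣ n
  · obtain ⟨t, rfl⟩ := h
    rw [if_pos (Dvd.intro t rfl)]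
    have hfilter := filter_dvd_range m t 0 hm hm
    rw [add_zero] at hfilter
    rw [hfilter, Finset.sum_image (fun x _ y _ h => Nat.eq_of_mul_eq_mul_left hm h)]
    rw [Nat.mul_div_cancel_left t hm, PowerSeries.coeff_mul,
      Finset.Nat.sum_antidiagonal_eq_sum_range_succ_mk,
      sum_reflect_eq t (fun u v => PowerSeries.coeff u a * PowerSeries.coeff v b)]
    apply Finset.sum_congr rfl
    intro u hu
    have hu' : u < t + 1 := Finset.mem_range.mp hu
    have h1 : m * t - m * u = m * (t - u) := by
      rw [Nat.mul_sub]
    rw [h1, Nat.mul_div_cancel_left u hm, coeff_psExpand,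
      if_pos (Dvd.intro (t - u) rfl), Nat.mul_div_cancel_left (t - u) hm]
  · rw [if_neg h]
    refine (Finset.sum_eq_zero fun x hx => ?_).symm
    obtain ⟨hx1, u, rfl⟩ := Finset.mem_filter.mp hx
    have hx1' : m * u < n + 1 := Finset.mem_range.mp hx1
    rw [coeff_psExpand]
    rw [if_neg fun hd => h ?_]
    · ring
    · obtain ⟨v, hv⟩ := hd
      have hadd : m * (u + v) = m * u + m * v := by ring
      exact ⟨u + v, by omega⟩

noncomputable def cartier (m j : ℕ) (g : PowerSeries K) : PowerSeries K :=
  PowerSeries.mk fun k => PowerSeries.coeff (m * k + j) g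

theorem coeff_cartier (m j : ℕ) (g : PowerSeries K) (k : ℕ) :
    PowerSeries.coeff k (cartier m j g) = PowerSeries.coeff (m * k + j) g := by
  simp [cartier]

theorem cartier_add (m j : ℕ) (a b : PowerSeries K) :
    cartier m j (a + b) = cartier m j a + cartier m j b := by
  ext k; simp [coeff_cartier]

theorem cartier_sum {ι : Type*} (m j : ℕ) (s : Finset ι) (g : ι → PowerSeries K) :
    cartier m j (∑ i ∈ s, g i) = ∑ i ∈ s, cartier m j (g i) := by
  ext k
  simp [coeff_cartier, map_sum]

theorem cartier_mul_expand {m j : ℕ} (hm : 0 < m) (hj : j < m) (a b : PowerSeries K) :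
    cartier m j (a * psExpand K m b) = cartier m j a * b := by
  ext k
  rw [coeff_cartier, coeff_mul_expand]
  have hsplit : ∀ x ∈ Finset.range (m * k + j + 1),
      PowerSeries.coeff (m * k + j - x) a *
        (if m ∣ x then PowerSeries.coeff (x / m) b else 0) =
      if m ∣ x then
        PowerSeries.coeff (m * k + j - x) a * PowerSeries.coeff (x / m) b
      else 0 := by
    intro x _; split_ifs <;> simp
  rw [Finset.sum_congr rfl hsplit, ← Finset.sum_filter, filter_dvd_range m k j hm hj,
    Finset.sum_image (fun x _ y _ h => Nat.eq_of_mul_eq_mul_left hm h)]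
  rw [PowerSeries.coeff_mul, Finset.Nat.sum_antidiagonal_eq_sum_range_succ_mk,
    sum_reflect_eq k (fun u v => PowerSeries.coeff u (cartier m j a) * PowerSeries.coeff v b)]
  apply Finset.sum_congr rfl
  intro u hu
  have hu' : u < k + 1 := Finset.mem_range.mp hu
  have h1 : m * k + j - m * u = m * (k - u) + j := by
    have := Nat.mul_sub m k u
    have h2 : m * u ≤ m * k := Nat.mul_le_mul_left m (by omega)
    omega
  rw [h1, Nat.mul_div_cancel_left u hm, coeff_cartier]

noncomputable def polyCartier (m j : ℕ) (p : K[X]) : K[X] :=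
  ∑ k ∈ Finset.range (p.natDegree + 1), Polynomial.C (p.coeff (m * k + j)) * Polynomial.X ^ k

theorem polyCartier_coeff {m : ℕ} (j : ℕ) (hm : 0 < m) (p : K[X]) (k : ℕ) :
    (polyCartier m j p).coeff k = p.coeff (m * k + j) := by
  rw [polyCartier, Polynomial.finset_sum_coeff]
  simp only [Polynomial.coeff_C_mul, Polynomial.coeff_X_pow, mul_ite, mul_one, mul_zero]
  rw [Finset.sum_ite_eq (Finset.range (p.natDegree + 1))]
  split_ifs with h
  · rfl
  · have hk : p.natDegree < k := by
      simp only [Finset.mem_range] at h; omega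
    rw [Polynomial.coeff_eq_zero_of_natDegree_lt]
    have : k ≤ m * k := Nat.le_mul_of_pos_left k hm
    omega

theorem polyCartier_zero (m j : ℕ) : polyCartier m j (0 : K[X]) = 0 := by
  simp [polyCartier]

theorem cartier_coe {m : ℕ} (j : ℕ) (hm : 0 < m) (p : K[X]) :
    cartier m j (p : PowerSeries K) = ((polyCartier m j p : K[X]) : PowerSeries K) := by
  ext k
  simp [coeff_cartier, Polynomial.coeff_coe, polyCartier_coeff j hm]

theorem exists_polyCartier_ne_zero {m : ℕ} (hm : 0 < m) {p : K[X]} (hp : p ≠ 0) :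
    ∃ j, j < m ∧ polyCartier m j p ≠ 0 := by
  have hex : ¬ ∀ n, p.coeff n = 0 := fun h => hp (Polynomial.ext fun n => by simp [h n])
  obtain ⟨n, hn⟩ := not_forall.mp hex
  refine ⟨n % m, Nat.mod_lt n hm, fun h0 => hn ?_⟩
  have := polyCartier_coeff (n % m) hm p (n / m)
  rw [h0, Polynomial.coeff_zero] at this
  rw [← Nat.div_add_mod n m] at hn ⊢
  exact this.symm

theorem cartier_zero (m j : ℕ) : cartier m j (0 : PowerSeries K) = 0 := by
  ext k; simp [coeff_cartier]

variable {q : ℕ}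

theorem compress (hq : 0 < q) (f : PowerSeries K) :
    ∀ s, ∀ N (pneg : K[X]) (p : ℕ → K[X]), (∀ i, i < s → p i = 0) → p s ≠ 0 → s ≤ N →
      ((pneg : PowerSeries K) +
        ∑ i ∈ Finset.range (N + 1), (p i : PowerSeries K) * psExpand K (q ^ i) f = 0) →
      ∃ (g0 : K[X]) (g : ℕ → K[X]), g 0 ≠ 0 ∧
        ((g0 : PowerSeries K) +
          ∑ i ∈ Finset.range (N - s + 1), (g i : PowerSeries K) * psExpand K (q ^ i) f = 0) := by
  intro s
  induction s with
  | zero => intro N pneg p _ hp0 _ heq; exact ⟨pneg, p, hp0, by simpa using heq⟩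
  | succ s ih =>
    intro N pneg p hlow hs hsN heq
    rw [Finset.sum_range_succ'] at heq
    rw [hlow 0 (Nat.succ_pos s)] at heq
    simp only [Polynomial.coe_zero, zero_mul, add_zero, pow_zero] at heq
    have hsum : ∑ i ∈ Finset.range N, (p (i+1) : PowerSeries K) * psExpand K (q ^ (i+1)) f
        = ∑ i ∈ Finset.range N,
            (p (i+1) : PowerSeries K) * psExpand K q (psExpand K (q ^ i) f) := by
      apply Finset.sum_congr rfl
      intro i _
      rw [psExpand_psExpand hq, ← pow_succ']
    rw [hsum] at heq
    obtain ⟨j, hj, hjne⟩ := exists_polyCartier_ne_zero hq hs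
    have hc := congrArg (cartier q j) heq
    rw [cartier_add, cartier_sum, cartier_zero, cartier_coe j hq] at hc
    have hsum2 : ∑ i ∈ Finset.range N,
        cartier q j ((p (i+1) : PowerSeries K) * psExpand K q (psExpand K (q ^ i) f))
        = ∑ i ∈ Finset.range N,
            ((polyCartier q j (p (i+1)) : K[X]) : PowerSeries K) * psExpand K (q ^ i) f := by
      apply Finset.sum_congr rfl
      intro i _
      rw [cartier_mul_expand hq hj, cartier_coe j hq]
    rw [hsum2] at hc
    have hN : N = (N - 1) + 1 := by omega
    obtain ⟨g0, g, hg0, hgeq⟩ := ih (N-1) (polyCartier q j pneg)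
      (fun i => polyCartier q j (p (i+1)))
      (fun i hi => by show polyCartier q j (p (i+1)) = 0; rw [hlow (i+1) (by omega), polyCartier_zero]) hjne (by omega)
      (by rw [← hN]; exact hc)
    refine ⟨g0, g, hg0, ?_⟩
    have hNs : N - 1 - s = N - (s+1) := by omega
    rwa [hNs] at hgeq

theorem relation_expand (hq : 0 < q) (f : PowerSeries K) (k T : ℕ) (pneg : K[X])
    (p : ℕ → K[X])
    (heq : (pneg : PowerSeries K) +
      ∑ i ∈ Finset.range (T + 1), (p i : PowerSeries K) * psExpand K (q ^ i) f = 0) :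
    ((Polynomial.expand K (q ^ k) pneg : K[X]) : PowerSeries K) +
      ∑ i ∈ Finset.range (T + 1),
        ((Polynomial.expand K (q ^ k) (p i) : K[X]) : PowerSeries K) *
          psExpand K (q ^ (i + k)) f = 0 := by
  have hqk : 0 < q ^ k := pow_pos hq k
  have hc := congrArg (psExpand K (q ^ k)) heq
  rw [psExpand_add, psExpand_sum, psExpand_zero, psExpand_coe _ hqk] at hc
  have hsum : ∀ i ∈ Finset.range (T+1),
      psExpand K (q^k) ((p i : PowerSeries K) * psExpand K (q^i) f)
      = ((Polynomial.expand K (q^k) (p i) : K[X]) : PowerSeries K) *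
          psExpand K (q^(i+k)) f := by
    intro i _
    rw [psExpand_mul hqk, psExpand_coe _ hqk, psExpand_psExpand hqk, ← pow_add,
      Nat.add_comm k i]
  rw [Finset.sum_congr rfl hsum] at hc
  exact hc

theorem algebraMap_ratFunc_coe (P : K[X]) :
    (algebraMap (RatFunc K) (LaurentSeries K)) (algebraMap K[X] (RatFunc K) P)
      = ((P : PowerSeries K) : LaurentSeries K) := by
  rw [RingHom.algebraMap_toAlgebra]
  have h1 : algebraMap K[X] (RatFunc K) P = (P : RatFunc K) := rfl
  rw [AlgHom.toRingHom_eq_coe, AlgHom.coe_toRingHom, ← div_one (algebraMap K[X] (RatFunc K) P),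
    ← map_one (algebraMap K[X] (RatFunc K)), RatFunc.liftAlgHom_apply_div, map_one, div_one]
  rfl

theorem algebraMap_poly_smul (P : K[X]) (x : LaurentSeries K) :
    (algebraMap K[X] (RatFunc K) P) • x
      = ((P : PowerSeries K) : LaurentSeries K) * x := by
  rw [Algebra.smul_def, algebraMap_ratFunc_coe]

theorem coePS_sum {ι : Type*} (s : Finset ι) (g : ι → PowerSeries K) :
    ((∑ i ∈ s, g i : PowerSeries K) : LaurentSeries K)
      = ∑ i ∈ s, ((g i : PowerSeries K) : LaurentSeries K) := by
  classical
  induction s using Finset.induction_on with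
  | empty => exact PowerSeries.coe_zero
  | insert _ _ h ih => rw [Finset.sum_insert h, PowerSeries.coe_add, ih, Finset.sum_insert h]

theorem coePS_eq_zero {g : PowerSeries K} (h : (g : LaurentSeries K) = 0) : g = 0 := by
  rw [← PowerSeries.coe_zero] at h
  exact HahnSeries.ofPowerSeries_injective h

theorem ratFunc_smul_eq (c : RatFunc K) (x : LaurentSeries K) :
    c • x = (c : LaurentSeries K) * x := by
  rw [Algebra.smul_def]; congr 1
  rw [← RatFunc.num_div_denom c, map_div₀, map_div₀, algebraMap_ratFunc_coe, algebraMap_ratFunc_coe,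
    RatFunc.coe_coe, RatFunc.coe_coe]
  rfl

theorem coe_ratFunc_poly (P : K[X]) :
    ((algebraMap K[X] (RatFunc K) P : RatFunc K) : LaurentSeries K)
      = ((P : PowerSeries K) : LaurentSeries K) := by
  rw [show (algebraMap K[X] (RatFunc K) P) = (P : RatFunc K) from rfl, RatFunc.coe_coe]

theorem existence_aux {q r : ℕ} (hq0 : 0 < q) (hr : 0 < r) (f : PowerSeries K)
    (c : Fin (r+1) → RatFunc K)
    (hsum : ∑ i, c i • (Fin.cons (1 : LaurentSeries K)
        (fun j : Fin r => (psExpand K (q ^ (j:ℕ)) f : LaurentSeries K))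
          : Fin (r+1) → LaurentSeries K) i = 0)
    (i0 : Fin (r+1)) (hi0 : c i0 ≠ 0) :
    ∃ (pneg : K[X]) (p : Fin r → K[X]), p ⟨0, hr⟩ ≠ 0 ∧
      (pneg : PowerSeries K) +
        ∑ i : Fin r, (p i : PowerSeries K) * psExpand K (q ^ (i : ℕ)) f = 0 := by
  classical
  set v : Fin (r+1) → LaurentSeries K :=
    Fin.cons 1 (fun j : Fin r => (psExpand K (q ^ (j:ℕ)) f : LaurentSeries K)) with hv
  have hsum' : ∑ i, ((c i : LaurentSeries K)) * v i = 0 := by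
    rw [← hsum]
    exact Finset.sum_congr rfl fun i _ => (ratFunc_smul_eq (c i) (v i)).symm
  set P : Fin (r+1) → K[X] :=
    fun i => (c i).num * ∏ j ∈ Finset.univ.erase i, (c j).denom with hP
  have hPalg : ∀ i, algebraMap K[X] (RatFunc K) (P i)
      = algebraMap K[X] (RatFunc K) (∏ j, (c j).denom) * c i := by
    intro i
    have hnum : algebraMap K[X] (RatFunc K) (c i).num
        = c i * algebraMap K[X] (RatFunc K) (c i).denom :=
      ((div_eq_iff (RatFunc.algebraMap_ne_zero (RatFunc.denom_ne_zero (c i)))).mp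
        (RatFunc.num_div_denom (c i)))
    rw [hP]
    simp only
    rw [map_mul, map_prod,
      ← Finset.mul_prod_erase Finset.univ _ (Finset.mem_univ i), map_mul, map_prod, hnum]
    ring
  have hPne : ∀ i, c i ≠ 0 → P i ≠ 0 := by
    intro i hci
    apply mul_ne_zero (RatFunc.num_ne_zero hci)
    rw [Finset.prod_ne_zero_iff]
    exact fun j _ => RatFunc.denom_ne_zero (c j)
  have hrel : ∑ i, ((P i : PowerSeries K) : LaurentSeries K) * v i = 0 := by
    calc ∑ i, ((P i : PowerSeries K) : LaurentSeries K) * v i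
        = ∑ i, ((algebraMap K[X] (RatFunc K) (∏ j, (c j).denom) : RatFunc K) : LaurentSeries K)
            * (((c i : RatFunc K) : LaurentSeries K) * v i) := by
          refine Finset.sum_congr rfl fun i _ => ?_
          rw [← coe_ratFunc_poly, hPalg i, map_mul, mul_assoc]
      _ = ((algebraMap K[X] (RatFunc K) (∏ j, (c j).denom) : RatFunc K) : LaurentSeries K)
            * ∑ i, ((c i : RatFunc K) : LaurentSeries K) * v i := by
          rw [Finset.mul_sum]
      _ = 0 := by rw [hsum', mul_zero]
  set u : Fin (r+1) → PowerSeries K :=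
    Fin.cons 1 (fun j : Fin r => psExpand K (q ^ (j:ℕ)) f) with hu
  have hvu : ∀ i, v i = ((u i : PowerSeries K) : LaurentSeries K) := by
    intro i
    refine Fin.cases ?_ (fun j => ?_) i
    · rw [hv, hu]; simp only [Fin.cons_zero]; exact PowerSeries.coe_one.symm
    · rw [hv, hu]; simp only [Fin.cons_succ]
  have hps : ∑ i, (P i : PowerSeries K) * u i = 0 := by
    apply coePS_eq_zero
    rw [coePS_sum, ← hrel]
    apply Finset.sum_congr rfl
    intro i _
    rw [PowerSeries.coe_mul, hvu i]
  rw [Fin.sum_univ_succ] at hps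
  simp only [hu, Fin.cons_zero, Fin.cons_succ, mul_one] at hps
  set pfun : ℕ → K[X] := fun i => if h : i < r then P (Fin.succ ⟨i, h⟩) else 0 with hpfun
  have hps2 : ((P 0 : K[X]) : PowerSeries K) +
      ∑ i ∈ Finset.range r, (pfun i : PowerSeries K) * psExpand K (q^i) f = 0 := by
    rw [← Fin.sum_univ_eq_sum_range
      (fun i => ((pfun i : K[X]) : PowerSeries K) * psExpand K (q^i) f) r]
    rw [← hps]
    congr 1
    apply Finset.sum_congr rfl
    intro i _
    have hpi : pfun (i : ℕ) = P (Fin.succ i) := by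
      rw [hpfun]; simp only [i.isLt, dif_pos, Fin.eta]
    rw [hpi]
  have hexists : ∃ s, pfun s ≠ 0 := by
    by_contra hno
    push_neg at hno
    rw [Finset.sum_eq_zero (fun i _ => by rw [hno i, Polynomial.coe_zero, zero_mul]),
      add_zero] at hps2
    have hP0 : P 0 = 0 := Polynomial.coe_eq_zero_iff.mp hps2
    have hPi0 : P i0 ≠ 0 := hPne i0 hi0
    rcases Fin.eq_zero_or_eq_succ i0 with h0 | ⟨j, hj⟩
    · rw [h0] at hPi0; exact hPi0 hP0
    · have hj0 : P (Fin.succ j) = 0 := by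
        have hnoj := hno (j : ℕ)
        rw [hpfun] at hnoj
        simpa only [j.isLt, dif_pos, Fin.eta] using hnoj
      exact hPi0 (by rw [hj]; exact hj0)
  set s := Nat.find hexists with hsdef
  have hs_ne : pfun s ≠ 0 := Nat.find_spec hexists
  have hs_lt : s < r := by
    by_contra hge
    exact hs_ne (by rw [hpfun]; exact dif_neg (by omega))
  have hlow : ∀ i, i < s → pfun i = 0 := fun i hi => not_not.mp (Nat.find_min hexists hi)
  have hr1 : r - 1 + 1 = r := by omega
  obtain ⟨g0, g, hg0, hgeq⟩ := compress hq0 f s (r-1) (P 0) pfun hlow hs_ne (by omega)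
    (by rw [hr1]; exact hps2)
  refine ⟨g0, fun i => if (i:ℕ) < r - 1 - s + 1 then g i else 0, ?_, ?_⟩
  · show (if (0:ℕ) < r - 1 - s + 1 then g 0 else 0) ≠ 0
    rw [if_pos (Nat.succ_pos _)]
    exact hg0
  · rw [Fin.sum_univ_eq_sum_range
      (fun i => ((if i < r-1-s+1 then g i else 0 : K[X]) : PowerSeries K) * psExpand K (q^i) f) r]
    have hTsub : Finset.range (r-1-s+1) ⊆ Finset.range r := Finset.range_subset_range.mpr (by omega)
    have h1 : ∑ i ∈ Finset.range r,
          ((if i < r-1-s+1 then g i else 0 : K[X]) : PowerSeries K) * psExpand K (q^i) f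
        = ∑ i ∈ Finset.range (r-1-s+1),
          ((if i < r-1-s+1 then g i else 0 : K[X]) : PowerSeries K) * psExpand K (q^i) f := by
      symm
      apply Finset.sum_subset hTsub
      intro x _ hx2
      rw [if_neg (fun h => hx2 (Finset.mem_range.mpr h)), Polynomial.coe_zero, zero_mul]
    have h2 : ∑ i ∈ Finset.range (r-1-s+1),
          ((if i < r-1-s+1 then g i else 0 : K[X]) : PowerSeries K) * psExpand K (q^i) f
        = ∑ i ∈ Finset.range (r-1-s+1), (g i : PowerSeries K) * psExpand K (q^i) f := by
      apply Finset.sum_congr rfl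
      intro x hx
      rw [if_pos (Finset.mem_range.mp hx)]
    rw [h1, h2]
    exact hgeq

theorem minimality_aux {q r : ℕ} (hq0 : 0 < q) (f : PowerSeries K)
    (hfd : Module.rank (RatFunc K) (Submodule.span (RatFunc K)
      ({1} ∪ Set.range fun m : ℕ => (psExpand K (q ^ m) f : LaurentSeries K))) = r)
    (m : ℕ) (hm : m + 1 < r) (pneg : K[X]) (p : ℕ → K[X]) (hp0 : p 0 ≠ 0)
    (heq : (pneg : PowerSeries K) +
      ∑ i ∈ Finset.range (m+1), (p i : PowerSeries K) * psExpand K (q^i) f = 0) :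
    False := by
  classical
  set t := Nat.findGreatest (fun i => p i ≠ 0) m with ht
  have ht_ne : p t ≠ 0 := by
    have h := Nat.findGreatest_spec (P := fun i => p i ≠ 0) (Nat.zero_le m) hp0
    simpa using h
  have ht_le : t ≤ m := Nat.findGreatest_le m
  have hhigh : ∀ k, t < k → k ≤ m → p k = 0 := fun k h1 h2 =>
    not_not.mp (Nat.findGreatest_is_greatest (P := fun i => p i ≠ 0) h1 h2)
  set s0 : Finset (LaurentSeries K) :=
    insert 1 ((Finset.range t).image fun i => (psExpand K (q^i) f : LaurentSeries K)) with hs0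
  set W := Submodule.span (RatFunc K) (s0 : Set (LaurentSeries K)) with hW
  have h1W : (1 : LaurentSeries K) ∈ W :=
    Submodule.subset_span (Finset.mem_coe.mpr (Finset.mem_insert_self _ _))
  have hcoeW : ∀ (P : K[X]) (x : LaurentSeries K), x ∈ W →
      ((P : PowerSeries K) : LaurentSeries K) * x ∈ W := by
    intro P x hx
    have hsm := W.smul_mem (algebraMap K[X] (RatFunc K) P) hx
    rwa [ratFunc_smul_eq, coe_ratFunc_poly] at hsm
  have claim : ∀ j : ℕ, (psExpand K (q^j) f : LaurentSeries K) ∈ W := by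
    intro j
    induction j using Nat.strong_induction_on with
    | _ j ih =>
      by_cases hj : j < t
      · refine Submodule.subset_span (Finset.mem_coe.mpr (Finset.mem_insert_of_mem ?_))
        exact Finset.mem_image.mpr ⟨j, Finset.mem_range.mpr hj, rfl⟩
      · set k := j - t with hk
        have hjtk : j = t + k := by omega
        have hrel := relation_expand hq0 f k m pneg p heq
        have htr : ∑ i ∈ Finset.range (m+1),
              ((Polynomial.expand K (q^k) (p i) : K[X]) : PowerSeries K) *
                psExpand K (q^(i+k)) f
            = ∑ i ∈ Finset.range (t+1),
              ((Polynomial.expand K (q^k) (p i) : K[X]) : PowerSeries K) *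
                psExpand K (q^(i+k)) f := by
          symm
          apply Finset.sum_subset (Finset.range_subset_range.mpr (by omega))
          intro x hx1 hx2
          have hx1' : x ≤ m := by simpa [Nat.lt_succ_iff] using Finset.mem_range.mp hx1
          have hx2' : t < x := by
            by_contra hc
            exact hx2 (Finset.mem_range.mpr (by omega))
          rw [hhigh x hx2' hx1', map_zero, Polynomial.coe_zero, zero_mul]
        rw [htr, Finset.sum_range_succ] at hrel
        have hmain : ((Polynomial.expand K (q^k) (p t) : K[X]) : PowerSeries K) *
              psExpand K (q^(t+k)) f
            = - ((Polynomial.expand K (q^k) pneg : K[X]) : PowerSeries K)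
              - ∑ i ∈ Finset.range t,
                  ((Polynomial.expand K (q^k) (p i) : K[X]) : PowerSeries K) *
                    psExpand K (q^(i+k)) f := by
          linear_combination hrel
        have hLaur := congrArg (fun x : PowerSeries K => (x : LaurentSeries K)) hmain
        rw [PowerSeries.coe_mul, PowerSeries.coe_sub, PowerSeries.coe_neg, coePS_sum] at hLaur
        have hterms : ∑ i ∈ Finset.range t,
              ((((Polynomial.expand K (q^k) (p i) : K[X]) : PowerSeries K) *
                psExpand K (q^(i+k)) f : PowerSeries K) : LaurentSeries K)
            = ∑ i ∈ Finset.range t,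
              (((Polynomial.expand K (q^k) (p i) : K[X]) : PowerSeries K) : LaurentSeries K) *
                ((psExpand K (q^(i+k)) f : PowerSeries K) : LaurentSeries K) :=
          Finset.sum_congr rfl fun i _ => PowerSeries.coe_mul _ _
        rw [hterms] at hLaur
        have hmemR : (- (((Polynomial.expand K (q^k) pneg : K[X]) : PowerSeries K) : LaurentSeries K)
            - ∑ i ∈ Finset.range t,
              (((Polynomial.expand K (q^k) (p i) : K[X]) : PowerSeries K) : LaurentSeries K) *
                ((psExpand K (q^(i+k)) f : PowerSeries K) : LaurentSeries K)) ∈ W := by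
          apply Submodule.sub_mem
          · apply Submodule.neg_mem
            have h1 := hcoeW (Polynomial.expand K (q^k) pneg) 1 h1W
            rwa [mul_one] at h1
          · apply Submodule.sum_mem
            intro i hi
            have hik : i + k < j := by
              have := Finset.mem_range.mp hi; omega
            exact hcoeW _ _ (ih (i+k) hik)
        have hEt : (((Polynomial.expand K (q^k) (p t) : K[X]) : PowerSeries K) : LaurentSeries K) *
            ((psExpand K (q^j) f : PowerSeries K) : LaurentSeries K) ∈ W := by
          rw [hjtk, hLaur]
          exact hmemR
        set cE : RatFunc K := algebraMap K[X] (RatFunc K) (Polynomial.expand K (q^k) (p t))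
          with hcE
        have hcne : cE ≠ 0 := RatFunc.algebraMap_ne_zero (fun h => ht_ne
          (Polynomial.expand_injective (pow_pos hq0 k) (by rw [h, map_zero])))
        have hEt2 : ((cE : RatFunc K) : LaurentSeries K) *
            ((psExpand K (q^j) f : PowerSeries K) : LaurentSeries K) ∈ W := by
          rw [hcE, coe_ratFunc_poly]
          exact hEt
        have hxW := W.smul_mem cE⁻¹ hEt2
        rw [ratFunc_smul_eq] at hxW
        rwa [← mul_assoc, ← map_mul, inv_mul_cancel₀ hcne, map_one,
          one_mul] at hxW
  have hsub : ({1} ∪ Set.range fun m : ℕ => (psExpand K (q ^ m) f : LaurentSeries K))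
      ⊆ (W : Set (LaurentSeries K)) := by
    rintro x (hx | ⟨i, rfl⟩)
    · rw [Set.mem_singleton_iff.mp hx]; exact h1W
    · exact claim i
  have hle := Submodule.span_le.mpr hsub
  have hr1 := Submodule.rank_mono (M := LaurentSeries K) hle
  rw [hfd] at hr1
  have hr2 := rank_span_le (R := RatFunc K) (s0 : Set (LaurentSeries K))
  have hcard : s0.card ≤ t + 1 := by
    refine (Finset.card_insert_le _ _).trans ?_
    have := Finset.card_image_le
      (s := Finset.range t) (f := fun i => (psExpand K (q^i) f : LaurentSeries K))
    rw [Finset.card_range] at this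
    omega
  have hfin : (r : Cardinal) ≤ ((t + 1 : ℕ) : Cardinal) := by
    refine hr1.trans (hr2.trans ?_)
    simp only [Finset.coe_sort_coe, Cardinal.mk_coe_finset]
    exact Nat.cast_le.mpr hcard
  have : r ≤ t + 1 := Nat.cast_le.mp hfin
  omega

end MahlerAux

open MahlerAux in
/-- if `V_f = Span_{K(z)}{1, f(z^{q^m}) : m ≥ 0}` has dimension `r`, then `f`
satisfies an inhomogeneous Mahler equation of order `r - 1` with nonzero coefficient of `f(z)`,
and no such equation of smaller order exists. -/
theorem mahler_minimal_inhomogeneous_equation_exists {K : Type*} [Field K] [CharZero K]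
    (q r : ℕ) (hq : 2 ≤ q) (hr : 0 < r) (f : PowerSeries K)
    (hfd : Module.rank (RatFunc K) (Submodule.span (RatFunc K)
      ({1} ∪ Set.range fun m : ℕ => (psExpand K (q ^ m) f : LaurentSeries K))) = r) :
    (∃ (pneg : K[X]) (p : Fin r → K[X]), p ⟨0, hr⟩ ≠ 0 ∧
      (pneg : PowerSeries K) +
        ∑ i : Fin r, (p i : PowerSeries K) * psExpand K (q ^ (i : ℕ)) f = 0) ∧
    (∀ m : ℕ, m + 1 < r →
      ¬ ∃ (pneg : K[X]) (p : Fin (m + 1) → K[X]), p 0 ≠ 0 ∧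
        (pneg : PowerSeries K) +
          ∑ i : Fin (m + 1), (p i : PowerSeries K) * psExpand K (q ^ (i : ℕ)) f = 0) := by
  have hq0 : 0 < q := by omega
  constructor
  · -- existence
    set v : Fin (r+1) → LaurentSeries K :=
      Fin.cons 1 (fun j : Fin r => (psExpand K (q ^ (j:ℕ)) f : LaurentSeries K)) with hv
    have hvmem : ∀ i, v i ∈ Submodule.span (RatFunc K)
        ({1} ∪ Set.range fun m : ℕ => (psExpand K (q ^ m) f : LaurentSeries K)) := by
      intro i
      refine Fin.cases ?_ (fun j => ?_) i
      · rw [hv]; simp only [Fin.cons_zero]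
        exact Submodule.subset_span (Or.inl rfl)
      · rw [hv]; simp only [Fin.cons_succ]
        exact Submodule.subset_span (Or.inr ⟨j, rfl⟩)
    have hnli : ¬ LinearIndependent (RatFunc K) v := by
      intro hli
      let V := Submodule.span (RatFunc K)
        ({1} ∪ Set.range fun m : ℕ => (psExpand K (q ^ m) f : LaurentSeries K))
      let w : Fin (r+1) → V := fun i => ⟨v i, hvmem i⟩
      have hw : LinearIndependent (RatFunc K) w :=
        LinearIndependent.of_comp V.subtype hli
      have hcard := hw.cardinal_lift_le_rank
      rw [show Module.rank (RatFunc K) V = r from hfd] at hcard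
      simp only [Cardinal.mk_fin, Cardinal.lift_natCast, Nat.cast_le] at hcard
      omega
    obtain ⟨c, hsum, i0, hi0⟩ := Fintype.not_linearIndependent_iff.mp hnli
    rw [hv] at hsum
    exact existence_aux hq0 hr f c hsum i0 hi0
  · intro m hm hex
    obtain ⟨pneg, p, hp0, heq⟩ := hex
    set pn : ℕ → K[X] := fun i => if h : i < m + 1 then p ⟨i, h⟩ else 0 with hpn
    have hpn0 : pn 0 ≠ 0 := by
      rw [hpn]
      simp only [Nat.succ_pos, dif_pos]; convert hp0 using 2; simp
    have heqn : (pneg : PowerSeries K) +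
        ∑ i ∈ Finset.range (m+1), (pn i : PowerSeries K) * psExpand K (q^i) f = 0 := by
      rw [← Fin.sum_univ_eq_sum_range
        (fun i => ((pn i : K[X]) : PowerSeries K) * psExpand K (q^i) f) (m+1)]
      rw [← heq]
      congr 1
      apply Finset.sum_congr rfl
      intro i _
      have hpi : pn (i:ℕ) = p i := by rw [hpn]; simp only [i.isLt, dif_pos, Fin.eta]
      rw [hpi]
    exact minimality_aux hq0 f hfd m hm pneg pn hpn0 heqn
end
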